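/- Let A be an m×n complex matrix, B an n×p complex matrix, G a {1}-inverse of B (BGB = B), and H a {1}-inverse of ABG ((ABG)H(ABG) = ABG). Then GH is a {1}-inverse of AB: (AB)(GH)(AB) = AB. -/

import Mathlib

namespace Matrix

variable {l m n α : Type*} [Fintype l] [Fintype m] [Fintype n] [Semiring α]

/-- `X` is a {1}-inverse of `M`. -/
def IsInnerInverse (M : Matrix m n α) (X : Matrix n m α) : Prop :=
  M * X * M = M

theorem IsInnerInverse.mul_of_mul_mul {A : Matrix l m α} {B : Matrix m n α}
    {G : Matrix n m α} {H : Matrix m l α} (hG : IsInnerInverse B G)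
    (hH : IsInnerInverse (A * B * G) H) : IsInnerInverse (A * B) (G * H) := by
  unfold IsInnerInverse at *
  calc A * B * (G * H) * (A * B) = A * B * G * H * (A * B * G) * B := by
        simp only [Matrix.mul_assoc, hG]
    _ = A * (B * G * B) := by rw [hH]; simp only [Matrix.mul_assoc]
    _ = A * B := by rw [hG]

end Matrix

theorem stmt_1 {m n p : ℕ}
    (A : Matrix (Fin m) (Fin n) ℂ) (B : Matrix (Fin n) (Fin p) ℂ)
    (G : Matrix (Fin p) (Fin n) ℂ) (H : Matrix (Fin n) (Fin m) ℂ)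
    (hG : B * G * B = B)
    (hH : (A * B * G) * H * (A * B * G) = A * B * G) :
    (A * B) * (G * H) * (A * B) = A * B :=
  Matrix.IsInnerInverse.mul_of_mul_mul hG hH
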